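/- arXiv:1611.09276 — 5 statements merged into one kernel-verified Lean document; each statement's English description precedes it below -/
import Mathlib

section
/- For every real number r with 0 < r < 1 and every natural number n ≥ 1, the sum over all strictly increasing n-tuples (i₁ < i₂ < ... < iₙ) of positive integers of r^(i₁+...+iₙ) equals r^(n(n+1)/2) / ∏_{i=1}^{n} (1 - r^i). -/
open Finset

/-- Product of geometric series over a finite index type. -/
private lemma auxpi (n : ℕ) (c : Fin n → ℝ) (h0 : ∀ j, 0 ≤ c j) (h1 : ∀ j, c j < 1) :
    HasSum (fun g : Fin n → ℕ => ∏ j, c j ^ g j) (∏ j, (1 - c j)⁻¹) := by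
  induction n with
  | zero =>
      simpa using hasSum_fintype (fun g : Fin 0 → ℕ => ∏ j, c j ^ g j)
  | succ n ih =>
      have hgeo : HasSum (fun m : ℕ => c 0 ^ m) (1 - c 0)⁻¹ :=
        hasSum_geometric_of_lt_one (h0 0) (h1 0)
      have hrest := ih (fun j => c j.succ) (fun j => h0 _) (fun j => h1 _)
      have hsummable : Summable (fun p : ℕ × (Fin n → ℕ) =>
          (c 0 ^ p.1) * ∏ j : Fin n, (c j.succ) ^ p.2 j) := by
        apply Summable.mul_of_nonneg hgeo.summable hrest.summable
        · exact fun m => pow_nonneg (h0 0) _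
        · exact fun g => Finset.prod_nonneg fun j _ => pow_nonneg (h0 _) _
      have hmul := hgeo.mul hrest hsummable
      have key : HasSum (fun g : Fin (n+1) → ℕ => ∏ j, c j ^ g j)
          ((1 - c 0)⁻¹ * ∏ j : Fin n, (1 - c j.succ)⁻¹) := by
        have h2 := ((Fin.consEquiv (fun _ => ℕ)).symm.hasSum_iff).mpr hmul
        convert h2 using 1
        case e'_3 => rfl
        funext g
        simp [Fin.prod_univ_succ, Fin.tail, Function.comp]
      rw [Fin.prod_univ_succ]
      exact key

private lemma auxsum (G : ℕ → ℕ) (N : ℕ) :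
    ∑ j ∈ Finset.range N, ∑ k ∈ Finset.range (j + 1), G k
      = ∑ k ∈ Finset.range N, (N - k) * G k := by
  induction N with
  | zero => simp
  | succ N ih =>
      rw [Finset.sum_range_succ, ih, Finset.sum_range_succ (fun k => (N + 1 - k) * G k),
        Finset.sum_range_succ G]
      have hc : ∀ k ∈ Finset.range N, (N + 1 - k) * G k = (N - k) * G k + G k := by
        intro k hk
        rw [Finset.mem_range] at hk
        have h : N + 1 - k = (N - k) + 1 := by omega
        rw [h, add_mul, one_mul]
      rw [Finset.sum_congr rfl hc, Finset.sum_add_distrib]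
      simp
      ring

private lemma gauss (n : ℕ) : ∑ k ∈ Finset.range n, (n - k) = n * (n + 1) / 2 := by
  have h1 : ∑ k ∈ Finset.range n, (n - k) = ∑ k ∈ Finset.range n, (k + 1) := by
    rw [← Finset.sum_range_reflect (fun k => n - k) n]
    refine Finset.sum_congr rfl fun k hk => ?_
    rw [Finset.mem_range] at hk
    omega
  have h2 : ∑ k ∈ Finset.range n, (k + 1) = ∑ k ∈ Finset.range (n + 1), k := by
    rw [Finset.sum_range_succ' (fun k => k) n]
    simp
  have h3 : (∑ i ∈ Finset.range (n + 1), i) * 2 = (n + 1) * n := by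
    simpa using Finset.sum_range_id_mul_two (n + 1)
  have h4 : n * (n + 1) = (n + 1) * n := Nat.mul_comm _ _
  rw [h1, h2]
  omega

/-- extension of `g` to `ℕ`, shifted by one -/
private def Gof (n : ℕ) (g : Fin n → ℕ) : ℕ → ℕ :=
  fun k => if h : k < n then g ⟨k, h⟩ + 1 else 0

/-- the strictly increasing tuple built from gaps `g` -/
private def phi (n : ℕ) (g : Fin n → ℕ) : Fin n → ℕ :=
  fun j => ∑ k ∈ Finset.range (j.val + 1), Gof n g k

private lemma Gof_coe (n : ℕ) (g : Fin n → ℕ) (j : Fin n) : Gof n g j.val = g j + 1 := by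
  simp [Gof, j.isLt]

private lemma phi_zero (n : ℕ) (g : Fin n → ℕ) (j : Fin n) (h : j.val = 0) :
    phi n g j = g j + 1 := by
  have h1 : j.val + 1 = 1 := by omega
  rw [phi, h1, Finset.range_one, Finset.sum_singleton, ← h, Gof_coe]

private lemma phi_succ (n : ℕ) (g : Fin n → ℕ) (j : Fin n) (m : ℕ) (h : j.val = m + 1) :
    phi n g j = phi n g ⟨m, by omega⟩ + (g j + 1) := by
  have h2 : (⟨m, by omega⟩ : Fin n).val = m := rfl
  rw [phi, phi, h2, show j.val + 1 = (m + 1) + 1 from by omega, Finset.sum_range_succ]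
  congr 1
  rw [show m + 1 = j.val from h.symm, Gof_coe]

private lemma phi_strictMono (n : ℕ) (g : Fin n → ℕ) : StrictMono (phi n g) := by
  intro j j' hjj
  apply Finset.sum_lt_sum_of_subset
  · exact Finset.range_subset_range.2 (by exact Nat.succ_le_succ (le_of_lt hjj))
  · exact Finset.mem_range.2 (Nat.lt_succ_self _)
  · exact fun h => absurd (Finset.mem_range.1 h) (by omega)
  · rw [Gof_coe]; omega
  · intro k _ _; exact Nat.zero_le _

private lemma phi_pos (n : ℕ) (g : Fin n → ℕ) (j : Fin n) : 1 ≤ phi n g j :=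
  le_trans (by rw [Gof_coe]; omega)
    (Finset.single_le_sum (f := Gof n g) (fun k _ => Nat.zero_le _)
      (Finset.mem_range.2 (Nat.lt_succ_self _)))

private lemma phi_inj (n : ℕ) : Function.Injective (phi n) := by
  intro g g' h
  funext j
  cases hj : j.val with
  | zero =>
      have h1 := congrFun h j
      rw [phi_zero n g j hj, phi_zero n g' j hj] at h1
      omega
  | succ m =>
      have h1 := congrFun h j
      have h2 := congrFun h ⟨m, by omega⟩
      rw [phi_succ n g j m hj, phi_succ n g' j m hj, h2] at h1
      omega

private lemma phi_surj (n : ℕ) (f : Fin n → ℕ) (hsm : StrictMono f) (hpos : ∀ j, 1 ≤ f j) :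
    ∃ g : Fin n → ℕ, phi n g = f := by
  set g : Fin n → ℕ := fun j => if h : j.val = 0 then f j - 1
    else f j - f ⟨j.val - 1, by omega⟩ - 1 with hg
  refine ⟨g, ?_⟩
  have key : ∀ m, ∀ hm : m < n, phi n g ⟨m, hm⟩ = f ⟨m, hm⟩ := by
    intro m
    induction m using Nat.strong_induction_on with
    | _ m ihm =>
      intro hm
      cases m with
      | zero =>
          have hp := hpos ⟨0, hm⟩
          have hgv : g ⟨0, hm⟩ = f ⟨0, hm⟩ - 1 := by simp [hg]
          rw [phi_zero n g ⟨0, hm⟩ rfl, hgv]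
          omega
      | succ m' =>
          have hm'n : m' < n := by omega
          have hprev := ihm m' (Nat.lt_succ_self m') hm'n
          have hlt : f ⟨m', hm'n⟩ < f ⟨m' + 1, hm⟩ :=
            hsm (by rw [Fin.mk_lt_mk]; omega)
          have hgv : g ⟨m' + 1, hm⟩ = f ⟨m' + 1, hm⟩ - f ⟨m', hm'n⟩ - 1 := by
            simp [hg]
          rw [phi_succ n g ⟨m' + 1, hm⟩ m' rfl, hprev, hgv]
          omega
  funext j
  have hk := key j.val j.isLt
  simpa using hk

/-- the bijection onto the subtype of strictly increasing positive tuples -/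
private noncomputable def phiEquiv (n : ℕ) :
    (Fin n → ℕ) ≃ {f : Fin n → ℕ // StrictMono f ∧ ∀ j, 1 ≤ f j} :=
  Equiv.ofBijective
    (fun g => ⟨phi n g, phi_strictMono n g, phi_pos n g⟩)
    ⟨fun g g' h => phi_inj n (congrArg Subtype.val h),
     fun f => by
      obtain ⟨g, hg⟩ := phi_surj n f.1 f.2.1 f.2.2
      exact ⟨g, Subtype.ext hg⟩⟩

private lemma sum_phi (n : ℕ) (g : Fin n → ℕ) :
    ∑ j, phi n g j = n * (n + 1) / 2 + ∑ j : Fin n, (n - j.val) * g j := by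
  have h1 : ∑ j : Fin n, phi n g j
      = ∑ j ∈ Finset.range n, ∑ k ∈ Finset.range (j + 1), Gof n g k :=
    Fin.sum_univ_eq_sum_range (fun m => ∑ k ∈ Finset.range (m + 1), Gof n g k) n
  rw [h1, auxsum]
  have h2 : ∑ k ∈ Finset.range n, (n - k) * Gof n g k
      = ∑ j : Fin n, (n - j.val) * Gof n g j.val :=
    (Fin.sum_univ_eq_sum_range (fun k => (n - k) * Gof n g k) n).symm
  rw [h2]
  have h3 : ∀ j : Fin n, (n - j.val) * Gof n g j.val
      = (n - j.val) + (n - j.val) * g j := by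
    intro j
    rw [Gof_coe]
    ring
  rw [Finset.sum_congr rfl (fun j _ => h3 j), Finset.sum_add_distrib]
  congr 1
  rw [Fin.sum_univ_eq_sum_range (fun k => n - k) n, gauss]

/-- Euler's identity: the sum over strictly increasing `n`-tuples of positive integers
`i₁ < … < iₙ` of `r^(i₁+⋯+iₙ)` equals `r^(n(n+1)/2) / ∏_{i=1}^n (1 - r^i)`. -/
theorem euler_identity (r : ℝ) (hr0 : 0 < r) (hr1 : r < 1) (n : ℕ) (hn : 1 ≤ n) :
    HasSum (fun i : {f : Fin n → ℕ // StrictMono f ∧ ∀ j, 1 ≤ f j} =>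
        r ^ (∑ j, i.1 j))
      (r ^ (n * (n + 1) / 2) / ∏ i ∈ Finset.range n, (1 - r ^ (i + 1))) := by
  set c : Fin n → ℝ := fun j => r ^ (n - j.val) with hc
  have hc0 : ∀ j, 0 ≤ c j := fun j => pow_nonneg hr0.le _
  have hc1 : ∀ j : Fin n, c j < 1 := fun j =>
    pow_lt_one₀ hr0.le hr1 (by have := j.isLt; omega)
  have hpi := (auxpi n c hc0 hc1).mul_left (r ^ (n * (n + 1) / 2))
  have hcomp : HasSum ((fun i : {f : Fin n → ℕ // StrictMono f ∧ ∀ j, 1 ≤ f j} =>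
      r ^ (∑ j, i.1 j)) ∘ (phiEquiv n))
      (r ^ (n * (n + 1) / 2) * ∏ j, (1 - c j)⁻¹) := by
    convert hpi using 1
    case e'_3 => rfl
    funext g
    show r ^ (∑ j, phi n g j) = _
    rw [sum_phi, pow_add]
    congr 1
    rw [← Finset.prod_pow_eq_pow_sum]
    exact Finset.prod_congr rfl fun j _ => by rw [pow_mul]
  have hkey := ((phiEquiv n).hasSum_iff).mp hcomp
  convert hkey using 1
  rw [div_eq_mul_inv]
  congr 1
  have e1 : ∏ j : Fin n, (1 - c j)⁻¹ = ∏ i ∈ Finset.range n, (1 - r ^ (n - i))⁻¹ :=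
    Fin.prod_univ_eq_prod_range (fun i => (1 - r ^ (n - i))⁻¹) n
  have e2 := Finset.prod_range_reflect (fun i => (1 - r ^ (n - i))⁻¹) n
  have e3 : ∏ j ∈ Finset.range n, (1 - r ^ (n - (n - 1 - j)))⁻¹
      = ∏ j ∈ Finset.range n, (1 - r ^ (j + 1))⁻¹ := by
    refine Finset.prod_congr rfl fun j hj => ?_
    rw [Finset.mem_range] at hj
    rw [show n - (n - 1 - j) = j + 1 from by omega]
  rw [e1, ← e2, e3, Finset.prod_inv_distrib]
end

section
/- Let T₁(z) = 1/(z+1) and T₂(z) = 1/(z+2). Let c be the largest real root of the polynomial 128c⁷ + 768c⁶ + 1296c⁵ - 192c⁴ - 1764c³ - 108c² + 819c - 216, and let ρ = (-c + √(-6c + 5c² + 12c³ + 4c⁴))/(2c). Then T₁(c-ρ) - c = c - T₂(c+ρ), i.e., the images T₁(c-ρ) and T₂(c+ρ) are equidistant from c. -/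
/-- Let `c` be the largest real root of
`128c⁷ + 768c⁶ + 1296c⁵ - 192c⁴ - 1764c³ - 108c² + 819c - 216`, and
`ρ = (-c + √(-6c + 5c^2 + 12c^3 + 4c^4))/(2c)`.  Then the quantity under the square root
is positive, `c - ρ + 1 > 0`, and `T₁(c-ρ) - c = c - T₂(c+ρ)` where `Tᵢ(x) = 1/(x+i)`;
i.e. the images `T₁(c-ρ)` and `T₂(c+ρ)` are equidistant from `c`. -/
theorem equidistant_images (c ρ : ℝ)
    (hroot : 128*c^7 + 768*c^6 + 1296*c^5 - 192*c^4 - 1764*c^3 - 108*c^2 + 819*c - 216 = 0)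
    (hmax : ∀ x : ℝ,
      128*x^7 + 768*x^6 + 1296*x^5 - 192*x^4 - 1764*x^3 - 108*x^2 + 819*x - 216 = 0 → x ≤ c)
    (hρ : ρ = (-c + Real.sqrt (-6*c + 5*c^2 + 12*c^3 + 4*c^4)) / (2*c)) :
    0 < -6*c + 5*c^2 + 12*c^3 + 4*c^4 ∧ 0 < c - ρ + 1 ∧
      1 / (c - ρ + 1) - c = c - 1 / (c + ρ + 2) := by
  -- First, show c > 0.7 using IVT and hmax
  have hc : (0.7 : ℝ) < c := by
    set P : ℝ → ℝ := fun x =>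
      128*x^7 + 768*x^6 + 1296*x^5 - 192*x^4 - 1764*x^3 - 108*x^2 + 819*x - 216 with hP
    have hcont : ContinuousOn P (Set.Icc (0.7:ℝ) 0.8) := by
      apply Continuous.continuousOn; fun_prop
    have h0 : (0:ℝ) ∈ Set.Icc (P 0.7) (P 0.8) := by
      constructor <;> · simp only [hP]; norm_num
    obtain ⟨x, hx, hPx⟩ := intermediate_value_Icc (by norm_num : (0.7:ℝ) ≤ 0.8) hcont h0
    have hxc := hmax x hPx
    have hx7 : (0.7:ℝ) ≤ x := hx.1
    have hne : x ≠ 0.7 := by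
      intro h; rw [h] at hPx; simp only [hP] at hPx; norm_num at hPx
    have : (0.7:ℝ) < x := lt_of_le_of_ne hx7 (Ne.symm hne)
    linarith
  have hc0 : (0:ℝ) < c := by linarith
  have hD : 0 < -6*c + 5*c^2 + 12*c^3 + 4*c^4 := by nlinarith
  set s := Real.sqrt (-6*c + 5*c^2 + 12*c^3 + 4*c^4) with hs
  have hs0 : 0 ≤ s := Real.sqrt_nonneg _
  have hssq : s^2 = -6*c + 5*c^2 + 12*c^3 + 4*c^4 := Real.sq_sqrt hD.le
  have hslt : s < 2*c^2 + 3*c := by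
    rw [hs]
    rw [show (2*c^2 + 3*c) = Real.sqrt ((2*c^2+3*c)^2) by
      rw [Real.sqrt_sq (by nlinarith)]]
    apply Real.sqrt_lt_sqrt hD.le
    nlinarith
  have hρs : 2*c*ρ + c = s := by
    rw [hρ]; field_simp; ring
  have hA : 0 < c - ρ + 1 := by nlinarith [hρs, hslt, hc0]
  have hB : 0 < c + ρ + 2 := by nlinarith [hρs, hs0, hc0]
  refine ⟨hD, hA, ?_⟩
  have hkey : 4*c^2*ρ^2 + 4*c^2*ρ + c^2 = -6*c + 5*c^2 + 12*c^3 + 4*c^4 := by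
    rw [← hssq]; nlinarith [hρs]
  field_simp
  nlinarith [hkey, hA, hB, sq_nonneg (c - ρ)]
end

section
/- Let 0 < h < 1, and let (aₙ)_{n≥1} and (bₙ)_{n≥1} be sequences of nonnegative reals with aₙ = bₙ for n ≤ M and aₙ ≤ K·hⁿ for all n, where K ≥ 0 and M ≥ 1. Then for every n ≥ 1, the difference between Σ over increasing n-tuples of ∏ a_{i_j} (over all positive integers) and the same sum restricted to tuples with iₙ ≤ M is at most Σ_{l=0}^{n-1} K^{n-l} · β_l · h^{M(n-l)} · E_{n-l}(h), where β_l is the restricted l-fold sum Σ_{i₁<...<i_l≤M} ∏ a_{i_j} (with β₀ = 1) and E_m(h) = h^{m(m+1)/2}/∏_{i=1}^m(1-hⁱ). -/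
open Finset
open scoped ENNReal

noncomputable section TTB

abbrev Sm (m : ℕ) := {f : Fin m → ℕ // StrictMono f ∧ ∀ j, 1 ≤ f j}

instance : Unique (Sm 0) :=
  ⟨⟨⟨fun j => j.elim0, fun j => j.elim0, fun j => j.elim0⟩⟩,
   fun _ => Subtype.ext (funext fun j => j.elim0)⟩

def consEquiv (m : ℕ) : ℕ × Sm m ≃ Sm (m + 1) where
  toFun p :=
    ⟨Fin.cons (p.1 + 1) (fun k => p.1 + 1 + p.2.1 k), by
      constructor
      · intro i j hij
        induction j using Fin.cases with
        | zero => exact absurd hij (Fin.not_lt_zero _).elim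
        | succ k =>
          induction i using Fin.cases with
          | zero =>
            simp only [Fin.cons_zero, Fin.cons_succ]
            have := p.2.2.2 k; omega
          | succ k' =>
            simp only [Fin.cons_succ]
            have hk : k' < k := by
              have := hij; simpa [Fin.succ_lt_succ_iff] using this
            have := p.2.2.1 hk; omega
      · intro j
        induction j using Fin.cases with
        | zero => simp
        | succ k => simp only [Fin.cons_succ]; omega⟩
  invFun f :=
    (f.1 0 - 1,
      ⟨fun k => f.1 k.succ - f.1 0, by
        constructor
        · intro i j hij
          show f.1 i.succ - f.1 0 < f.1 j.succ - f.1 0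
          have h1 : f.1 i.succ < f.1 j.succ := f.2.1 (by simpa using hij)
          have h2 : f.1 0 < f.1 i.succ := f.2.1 (Fin.succ_pos i)
          omega
        · intro k
          show 1 ≤ f.1 k.succ - f.1 0
          have h2 : f.1 0 < f.1 k.succ := f.2.1 (Fin.succ_pos k)
          omega⟩)
  left_inv p := by
    obtain ⟨s, g⟩ := p
    refine Prod.ext ?_ (Subtype.ext (funext fun k => ?_)) <;>
      simp [Fin.cons_succ, Fin.cons_zero]
  right_inv f := by
    refine Subtype.ext (funext fun j => ?_)
    induction j using Fin.cases with
    | zero =>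
      have := f.2.2 0
      simp only [Fin.cons_zero]; omega
    | succ k =>
      have h2 : f.1 0 < f.1 k.succ := f.2.1 (Fin.succ_pos k)
      have := f.2.2 0
      simp only [Fin.cons_succ]; omega

lemma euler (x : ℝ≥0∞) : ∀ m : ℕ,
    ∑' f : Sm m, x ^ (∑ j, f.1 j) = ∏ i ∈ range m, (x ^ (i + 1) * (1 - x ^ (i + 1))⁻¹)
  | 0 => by
    rw [tsum_eq_single default (fun b hb => absurd (Subsingleton.elim b default) hb)]
    simp
  | (m + 1) => by
    rw [← (consEquiv m).tsum_eq (fun f : Sm (m+1) => x ^ (∑ j, f.1 j))]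
    have key : ∀ p : ℕ × Sm m,
        x ^ (∑ j, ((consEquiv m) p).1 j) = (x ^ (m+1)) * ((x^(m+1))^p.1 * x ^ (∑ j, p.2.1 j)) := by
      intro p
      obtain ⟨s, g⟩ := p
      dsimp only
      have hsum : (∑ j, ((consEquiv m) (s, g)).1 j) = (m+1) * (s+1) + ∑ j, g.1 j := by
        show (∑ j, (Fin.cons (s + 1) (fun k => s + 1 + g.1 k) : Fin (m+1) → ℕ) j) = _
        rw [Fin.sum_univ_succ]
        simp only [Fin.cons_zero, Fin.cons_succ, Finset.sum_add_distrib, Finset.sum_const,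
          card_univ, Fintype.card_fin, smul_eq_mul]
        ring
      rw [hsum, pow_add, pow_mul, pow_succ']
      ring
    rw [tsum_congr key, ENNReal.tsum_prod']
    dsimp only
    simp_rw [ENNReal.tsum_mul_left, ENNReal.tsum_mul_right, ENNReal.tsum_geometric]
    rw [euler x m, Finset.prod_range_succ]
    ring

open scoped Classical in
def Fmono (N l : ℕ) : Finset (Fin l → ℕ) :=
  (Fintype.piFinset fun _ => Icc 1 N).filter (fun f => StrictMono f)

lemma mem_Fmono {N l : ℕ} {f : Fin l → ℕ} :
    f ∈ Fmono N l ↔ StrictMono f ∧ ∀ j, 1 ≤ f j ∧ f j ≤ N := by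
  classical
  simp only [Fmono, mem_filter, Fintype.mem_piFinset, mem_Icc]
  constructor
  · rintro ⟨h1, h2⟩; exact ⟨h2, fun j => h1 j⟩
  · rintro ⟨h1, h2⟩; exact ⟨fun j => h2 j, h1⟩

lemma sum_Fmono (G : ℕ → ℝ≥0∞) (N l : ℕ) :
    ∑ u ∈ Fmono N l, ∏ j, G (u j) = ∑ S ∈ (Icc 1 N).powersetCard l, ∏ i ∈ S, G i := by
  classical
  refine Finset.sum_bij' (fun u _ => Finset.image u univ)
    (fun S hS => S.orderEmbOfFin (Finset.mem_powersetCard.mp hS).2) ?_ ?_ ?_ ?_ ?_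
  · intro u hu
    rw [Finset.mem_powersetCard]
    obtain ⟨h1, h2⟩ := mem_Fmono.mp hu
    constructor
    · intro x hx
      simp only [Finset.mem_image] at hx
      obtain ⟨j, _, rfl⟩ := hx
      exact Finset.mem_Icc.mpr (h2 j)
    · rw [Finset.card_image_of_injective _ h1.injective, card_univ, Fintype.card_fin]
  · intro S hS
    rw [mem_Fmono]
    refine ⟨(S.orderEmbOfFin _).strictMono, fun j => ?_⟩
    have := Finset.orderEmbOfFin_mem S (Finset.mem_powersetCard.mp hS).2 j
    have := (Finset.mem_powersetCard.mp hS).1 this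
    exact Finset.mem_Icc.mp this
  · intro u hu
    obtain ⟨h1, _⟩ := mem_Fmono.mp hu
    exact (Finset.orderEmbOfFin_unique _ (fun j => Finset.mem_image_of_mem u (mem_univ j)) h1).symm
  · intro S hS
    apply Finset.coe_injective
    rw [Finset.coe_image, Finset.coe_univ, Set.image_univ]
    exact Finset.range_orderEmbOfFin S (Finset.mem_powersetCard.mp hS).2
  · intro u hu
    obtain ⟨h1, _⟩ := mem_Fmono.mp hu
    rw [Finset.prod_image (fun a _ b _ hab => h1.injective hab)]

lemma le_iff_lt_card {M n : ℕ} (f : Sm n) (j : Fin n) :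
    f.1 j ≤ M ↔ (j : ℕ) < (univ.filter fun i => f.1 i ≤ M).card := by
  constructor
  · intro hj
    have hsub : Finset.Iic j ⊆ univ.filter fun i => f.1 i ≤ M := fun k hk => by
      simp only [mem_filter, mem_univ, true_and]
      exact le_trans (f.2.1.monotone (Finset.mem_Iic.mp hk)) hj
    have := Finset.card_le_card hsub
    rw [Fin.card_Iic] at this
    omega
  · intro hj
    by_contra hM
    push_neg at hM
    have hsub : (univ.filter fun i => f.1 i ≤ M) ⊆ Finset.Iio j := fun k hk => by
      simp only [mem_filter] at hk
      exact Finset.mem_Iio.mpr (f.2.1.lt_iff_lt.mp (lt_of_le_of_lt hk.2 hM))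
    have := Finset.card_le_card hsub
    rw [Fin.card_Iio] at this
    omega

lemma prod_split {β : Type*} [CommMonoid β] {n l : ℕ} (hl : l ≤ n) (g : Fin n → β) :
    ∏ j, g j = (∏ j : Fin l, g (Fin.castLE hl j)) *
      ∏ k : Fin (n - l), g ⟨l + k.1, by omega⟩ := by
  have e : l + (n - l) = n := by omega
  calc ∏ j, g j = ∏ i : Fin (l + (n - l)), g (Fin.cast e i) :=
        (Fintype.prod_equiv (finCongr e) _ _ (fun i => rfl)).symm
    _ = _ := by
        rw [Fin.prod_univ_add]
        exact congrArg₂ (· * ·) (Finset.prod_congr rfl fun i _ => congrArg g (Fin.ext rfl))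
          (Finset.prod_congr rfl fun k _ => congrArg g (Fin.ext rfl))

lemma Tn_eq (M n : ℕ) (α : ℕ → ℝ≥0∞) :
    ∑' f : {f : Sm n // (univ.filter fun i => f.1 i ≤ M).card = n}, ∏ j, α (f.1.1 j)
      = ∑ S ∈ (Icc 1 M).powersetCard n, ∏ i ∈ S, α i := by
  classical
  let ψ : (Fmono M n : Finset (Fin n → ℕ)) ≃
      {f : Sm n // (univ.filter fun i => f.1 i ≤ M).card = n} :=
    { toFun := fun u =>
        ⟨⟨u.1, (mem_Fmono.mp u.2).1, fun j => ((mem_Fmono.mp u.2).2 j).1⟩, by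
          have : (univ.filter fun i => u.1 i ≤ M) = univ :=
            Finset.filter_true_of_mem fun j _ => ((mem_Fmono.mp u.2).2 j).2
          rw [this, card_univ, Fintype.card_fin]⟩
      invFun := fun f =>
        ⟨f.1.1, mem_Fmono.mpr ⟨f.1.2.1, fun j => ⟨f.1.2.2 j, by
          rw [le_iff_lt_card, f.2]; exact j.2⟩⟩⟩
      left_inv := fun u => Subtype.ext rfl
      right_inv := fun f => Subtype.ext (Subtype.ext rfl) }
  rw [← Equiv.tsum_eq ψ (fun f : {f : Sm n // (univ.filter fun i => f.1 i ≤ M).card = n} => ∏ j, α (f.1.1 j))]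
  rw [tsum_fintype]
  rw [← sum_Fmono α M n]
  show ∑ b : {x // x ∈ Fmono M n}, ∏ j, α (b.1 j) = _
  exact Finset.sum_coe_sort (Fmono M n) (fun u => ∏ j, α (u j))

lemma Tl_bound (M l n : ℕ) (hln : l < n) (α : ℕ → ℝ≥0∞) (K' x : ℝ≥0∞)
    (hα : ∀ i, α i ≤ K' * x ^ i) :
    ∑' f : {f : Sm n // (univ.filter fun i => f.1 i ≤ M).card = l}, ∏ j, α (f.1.1 j)
      ≤ (∑ S ∈ (Icc 1 M).powersetCard l, ∏ i ∈ S, α i) *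
        (K' ^ (n - l) * x ^ (M * (n - l)) * ∑' v : Sm (n - l), x ^ (∑ k, v.1 k)) := by
  classical
  have hl : l ≤ n := hln.le
  set T := {f : Sm n // (univ.filter fun i => f.1 i ≤ M).card = l}
  have hiff : ∀ f : T, ∀ j : Fin n, f.1.1 j ≤ M ↔ (j : ℕ) < l := by
    intro f j; exact (le_iff_lt_card f.1 j).trans (by rw [f.2])
  have hidx : ∀ k : Fin (n - l), l + (k : ℕ) < n := fun k => by omega
  let e : T → ({u // u ∈ Fmono M l} × Sm (n - l)) := fun f =>
    (⟨fun j => f.1.1 (Fin.castLE hl j), by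
      rw [mem_Fmono]
      refine ⟨fun i j hij => f.1.2.1
        (by simp only [Fin.lt_def, Fin.coe_castLE]; exact Fin.lt_def.mp hij), fun j => ?_⟩
      exact ⟨f.1.2.2 _, (hiff f _).mpr (by simpa using j.2)⟩⟩,
     ⟨fun k => f.1.1 ⟨l + k.1, hidx k⟩ - M, by
      constructor
      · intro i j hij
        have h1 : f.1.1 ⟨l + i.1, hidx i⟩ < f.1.1 ⟨l + j.1, hidx j⟩ :=
          f.1.2.1 (by simp only [Fin.mk_lt_mk]; omega)
        have h2 : M < f.1.1 ⟨l + i.1, hidx i⟩ := by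
          by_contra hc; push_neg at hc
          exact absurd ((hiff f _).mp hc) (by simp)
        show f.1.1 ⟨l + i.1, hidx i⟩ - M < f.1.1 ⟨l + j.1, hidx j⟩ - M
        omega
      · intro k
        have h2 : M < f.1.1 ⟨l + k.1, hidx k⟩ := by
          by_contra hc; push_neg at hc
          exact absurd ((hiff f _).mp hc) (by simp)
        show 1 ≤ f.1.1 ⟨l + k.1, hidx k⟩ - M
        omega⟩)
  have hbig : ∀ (f : T) (k : Fin (n - l)), M < f.1.1 ⟨l + k.1, hidx k⟩ := by
    intro f k
    by_contra hc; push_neg at hc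
    exact absurd ((hiff f _).mp hc) (by simp)
  have hinj : Function.Injective e := by
    intro f f' hee
    have h1 := congrArg (fun p => p.1.1) hee
    have h2 := congrArg (fun p => p.2.1) hee
    simp only [e] at h1 h2
    refine Subtype.ext (Subtype.ext (funext fun j => ?_))
    by_cases hc : (j : ℕ) < l
    · have := congrFun h1 ⟨j.1, hc⟩
      simpa only [Fin.castLE_mk, Fin.eta] using this
    · push_neg at hc
      have hk : (j : ℕ) - l < n - l := by omega
      have := congrFun h2 ⟨j.1 - l, hk⟩
      have hb1 := hbig f ⟨j.1 - l, hk⟩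
      have hb2 := hbig f' ⟨j.1 - l, hk⟩
      have hje : (⟨l + (j.1 - l), hidx ⟨j.1 - l, hk⟩⟩ : Fin n) = j := Fin.ext (by simp; omega)
      rw [hje] at this hb1 hb2
      omega
  set g : {u // u ∈ Fmono M l} × Sm (n - l) → ℝ≥0∞ := fun p =>
    (∏ j, α (p.1.1 j)) * (K' ^ (n - l) * x ^ (M * (n - l)) * x ^ (∑ k, p.2.1 k)) with hg
  refine le_trans (Summable.tsum_le_tsum_of_inj (g := g) e hinj (fun _ _ => zero_le) ?_
    ENNReal.summable ENNReal.summable) ?_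
  · -- pointwise bound
    intro f
    show ∏ j, α (f.1.1 j) ≤
      (∏ j, α (f.1.1 (Fin.castLE hl j))) *
        (K' ^ (n - l) * x ^ (M * (n - l)) * x ^ (∑ k, (f.1.1 ⟨l + k.1, hidx k⟩ - M)))
    rw [prod_split hl (fun j => α (f.1.1 j))]
    refine mul_le_mul_right ?_ _
    calc ∏ k : Fin (n - l), α (f.1.1 ⟨l + k.1, hidx k⟩)
        ≤ ∏ k : Fin (n - l), (K' * (x ^ M * x ^ (f.1.1 ⟨l + k.1, hidx k⟩ - M))) := by
          refine Finset.prod_le_prod' fun k _ => le_trans (hα _) ?_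
          rw [← pow_add]
          have : M + (f.1.1 ⟨l + k.1, hidx k⟩ - M) = f.1.1 ⟨l + k.1, hidx k⟩ := by
            have := hbig f k; omega
          rw [this]
      _ = K' ^ (n - l) * x ^ (M * (n - l)) * x ^ (∑ k, (f.1.1 ⟨l + k.1, hidx k⟩ - M)) := by
          simp only [Finset.prod_mul_distrib, Finset.prod_const, card_univ, Fintype.card_fin]
          rw [Finset.prod_pow_eq_pow_sum, ← pow_mul, mul_comm (M : ℕ) (n - l), mul_comm (n - l) M]
          ring
  · -- evaluate the tsum over the product index
    rw [ENNReal.tsum_prod']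
    simp_rw [ENNReal.tsum_mul_left, ENNReal.tsum_mul_right]
    rw [tsum_fintype]
    refine mul_le_mul_left (le_of_eq ?_) _
    show ∑ u : {u // u ∈ Fmono M l}, ∏ j, α (u.1 j) = _
    rw [← sum_Fmono α M l]
    exact Finset.sum_coe_sort (Fmono M l) (fun u => ∏ j, α (u j))

lemma gauss2 (m : ℕ) : (∑ i ∈ range m, (i + 1)) * 2 = m * (m + 1) := by
  induction m with
  | zero => simp
  | succ m ih =>
    rw [Finset.sum_range_succ, add_mul, ih]
    ring

lemma gauss_s6 (m : ℕ) : ∑ i ∈ range m, (i + 1) = m * (m + 1) / 2 :=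
  (Nat.div_eq_of_eq_mul_left two_pos (gauss2 m).symm).symm

end TTB


/-- Tail bound for truncated elementary symmetric sums: if `0 ≤ aᵢ ≤ K·hⁱ`
(with `aᵢ = bᵢ` for `i ≤ M`, so the restricted sums only involve the computed values),
then the difference between the full `n`-th elementary symmetric sum of `a` (over
strictly increasing tuples of positive integers) and the sum restricted to tuples with
`iₙ ≤ M` is at most `Σ_{l=0}^{n-1} K^{n-l} βₗ h^{M(n-l)} E_{n-l}(h)`, where
`βₗ = Σ_{i₁<…<iₗ≤M} ∏ a_{i_j}` and `E_m(h) = h^{m(m+1)/2}/∏_{i=1}^m (1-hⁱ)`. -/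
theorem truncation_tail_bound (a b : ℕ → ℝ) (K h : ℝ) (M : ℕ) (hM : 1 ≤ M)
    (hK : 0 ≤ K) (h0 : 0 < h) (h1 : h < 1)
    (ha0 : ∀ i, 0 ≤ a i) (hb0 : ∀ i, 0 ≤ b i)
    (hab : ∀ i ≤ M, a i = b i)
    (ha : ∀ i, a i ≤ K * h ^ i) (n : ℕ) (hn : 1 ≤ n) :
    (∑' i : {f : Fin n → ℕ // StrictMono f ∧ ∀ j, 1 ≤ f j}, ∏ j, a (i.1 j)) -
        (∑ S ∈ (Finset.Icc 1 M).powersetCard n, ∏ i ∈ S, a i) ≤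
      ∑ l ∈ Finset.range n,
        K ^ (n - l) * (∑ S ∈ (Finset.Icc 1 M).powersetCard l, ∏ i ∈ S, a i) *
          h ^ (M * (n - l)) *
          (h ^ ((n - l) * (n - l + 1) / 2) /
            ∏ i ∈ Finset.range (n - l), (1 - h ^ (i + 1))) := by
  classical
  open Finset in
  set α : ℕ → ℝ≥0∞ := fun i => ENNReal.ofReal (a i) with hαdef
  set K' := ENNReal.ofReal K with hK'
  set x := ENNReal.ofReal h with hx'
  have hαle : ∀ i, α i ≤ K' * x ^ i := fun i => by
    rw [hαdef, hK', hx', ← ENNReal.ofReal_pow h0.le, ← ENNReal.ofReal_mul hK]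
    exact ENNReal.ofReal_le_ofReal (ha i)
  -- β conversion
  have hβ : ∀ l : ℕ, (∑ S ∈ (Icc 1 M).powersetCard l, ∏ i ∈ S, α i)
      = ENNReal.ofReal (∑ S ∈ (Icc 1 M).powersetCard l, ∏ i ∈ S, a i) := by
    intro l
    rw [ENNReal.ofReal_sum_of_nonneg (fun S _ => Finset.prod_nonneg fun i _ => ha0 i)]
    exact Finset.sum_congr rfl fun S _ => (ENNReal.ofReal_prod_of_nonneg (fun i _ => ha0 i)).symm
  have hden : ∀ i : ℕ, (0:ℝ) < 1 - h ^ (i + 1) := fun i => by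
    have : h ^ (i + 1) < 1 := pow_lt_one₀ h0.le h1 (by omega)
    linarith
  -- Euler conversion
  have hE : ∀ m : ℕ, (∑' v : Sm m, x ^ (∑ k, v.1 k))
      = ENNReal.ofReal (h ^ (m * (m + 1) / 2) / ∏ i ∈ range m, (1 - h ^ (i + 1))) := by
    intro m
    rw [euler x m]
    have step : ∀ i ∈ range m, x ^ (i+1) * (1 - x ^ (i+1))⁻¹
        = ENNReal.ofReal (h ^ (i+1) / (1 - h ^ (i+1))) := by
      intro i _
      rw [ENNReal.ofReal_div_of_pos (hden i), hx', ← ENNReal.ofReal_pow h0.le,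
        ENNReal.ofReal_sub 1 (pow_nonneg h0.le _), ENNReal.ofReal_one, div_eq_mul_inv]
    rw [Finset.prod_congr rfl step,
      ← ENNReal.ofReal_prod_of_nonneg (fun i _ => div_nonneg (pow_nonneg h0.le _) (hden i).le)]
    congr 1
    rw [Finset.prod_div_distrib, Finset.prod_pow_eq_pow_sum, gauss_s6]
  -- partition
  set T := ∑' f : Sm n, ∏ j, α (f.1 j) with hTdef
  have hpt : ∀ f : Sm n, (∏ j, α (f.1 j)) = ∑ l ∈ range (n+1),
      Set.indicator {g : Sm n | (univ.filter fun i => g.1 i ≤ M).card = l}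
        (fun g => ∏ j, α (g.1 j)) f := by
    intro f
    rw [Finset.sum_eq_single ((univ.filter fun i => f.1 i ≤ M).card)]
    · have hm : f ∈ {g : Sm n |
          (univ.filter fun i => g.1 i ≤ M).card = (univ.filter fun i => f.1 i ≤ M).card} := rfl
      exact (Set.indicator_of_mem hm (fun g : Sm n => ∏ j, α (g.1 j))).symm
    · intro c _ hc
      refine Set.indicator_of_notMem ?_ (fun g : Sm n => ∏ j, α (g.1 j))
      intro hm
      exact hc ((show (univ.filter fun i => f.1 i ≤ M).card = c from hm)).symm
    · intro hno
      exfalso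
      refine hno (mem_range.mpr ?_)
      have := Finset.card_filter_le (univ : Finset (Fin n)) (fun i => f.1 i ≤ M)
      simp only [card_univ, Fintype.card_fin] at this
      omega
  have hpart : T = ∑ l ∈ range (n+1),
      ∑' f : {g : Sm n // (univ.filter fun i => g.1 i ≤ M).card = l}, ∏ j, α (f.1.1 j) := by
    rw [hTdef]
    calc ∑' f : Sm n, ∏ j, α (f.1 j)
        = ∑' f : Sm n, ∑ l ∈ range (n+1),
            Set.indicator {g : Sm n | (univ.filter fun i => g.1 i ≤ M).card = l}
              (fun g => ∏ j, α (g.1 j)) f := tsum_congr hpt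
      _ = ∑ l ∈ range (n+1), ∑' f : Sm n,
            Set.indicator {g : Sm n | (univ.filter fun i => g.1 i ≤ M).card = l}
              (fun g => ∏ j, α (g.1 j)) f := Summable.tsum_finsetSum (fun _ _ => ENNReal.summable)
      _ = _ := Finset.sum_congr rfl fun l _ =>
            (tsum_subtype {g : Sm n | (univ.filter fun i => g.1 i ≤ M).card = l}
              (fun g => ∏ j, α (g.1 j))).symm
  -- bound each l < n
  have hterm0 : ∀ l, 0 ≤ K ^ (n - l) * (∑ S ∈ (Icc 1 M).powersetCard l, ∏ i ∈ S, a i) *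
      h ^ (M * (n - l)) * (h ^ ((n - l) * (n - l + 1) / 2) /
        ∏ i ∈ range (n - l), (1 - h ^ (i + 1))) := by
    intro l
    have hβ0 : 0 ≤ ∑ S ∈ (Icc 1 M).powersetCard l, ∏ i ∈ S, a i :=
      Finset.sum_nonneg fun S _ => Finset.prod_nonneg fun i _ => ha0 i
    have hprod0 : 0 ≤ ∏ i ∈ range (n - l), (1 - h ^ (i + 1)) :=
      Finset.prod_nonneg fun i _ => (hden i).le
    positivity
  have hTl : ∀ l ∈ range n,
      (∑' f : {g : Sm n // (univ.filter fun i => g.1 i ≤ M).card = l}, ∏ j, α (f.1.1 j))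
        ≤ ENNReal.ofReal (K ^ (n - l) * (∑ S ∈ (Icc 1 M).powersetCard l, ∏ i ∈ S, a i) *
            h ^ (M * (n - l)) * (h ^ ((n - l) * (n - l + 1) / 2) /
              ∏ i ∈ range (n - l), (1 - h ^ (i + 1)))) := by
    intro l hl
    have hln : l < n := mem_range.mp hl
    refine (Tl_bound M l n hln α K' x hαle).trans_eq ?_
    rw [hβ l, hE (n - l), hK', hx', ← ENNReal.ofReal_pow hK, ← ENNReal.ofReal_pow h0.le,
      ← ENNReal.ofReal_mul (pow_nonneg hK _),
      ← ENNReal.ofReal_mul (mul_nonneg (pow_nonneg hK _) (pow_nonneg h0.le _)),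
      ← ENNReal.ofReal_mul (Finset.sum_nonneg fun S _ => Finset.prod_nonneg fun i _ => ha0 i)]
    congr 1
    ring
  -- combine
  have hA0 : 0 ≤ ∑ S ∈ (Icc 1 M).powersetCard n, ∏ i ∈ S, a i :=
    Finset.sum_nonneg fun S _ => Finset.prod_nonneg fun i _ => ha0 i
  have hR0 : 0 ≤ ∑ l ∈ range n,
      K ^ (n - l) * (∑ S ∈ (Icc 1 M).powersetCard l, ∏ i ∈ S, a i) *
        h ^ (M * (n - l)) * (h ^ ((n - l) * (n - l + 1) / 2) /
          ∏ i ∈ range (n - l), (1 - h ^ (i + 1))) :=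
    Finset.sum_nonneg fun l _ => hterm0 l
  have hle : T ≤ ENNReal.ofReal (∑ l ∈ range n,
      K ^ (n - l) * (∑ S ∈ (Icc 1 M).powersetCard l, ∏ i ∈ S, a i) *
        h ^ (M * (n - l)) * (h ^ ((n - l) * (n - l + 1) / 2) /
          ∏ i ∈ range (n - l), (1 - h ^ (i + 1))))
      + ENNReal.ofReal (∑ S ∈ (Icc 1 M).powersetCard n, ∏ i ∈ S, a i) := by
    rw [hpart, Finset.sum_range_succ, Tn_eq M n α, hβ n,
      ENNReal.ofReal_sum_of_nonneg (fun l _ => hterm0 l)]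
    exact add_le_add_left (Finset.sum_le_sum hTl) _
  have hne : (ENNReal.ofReal (∑ l ∈ range n,
      K ^ (n - l) * (∑ S ∈ (Icc 1 M).powersetCard l, ∏ i ∈ S, a i) *
        h ^ (M * (n - l)) * (h ^ ((n - l) * (n - l + 1) / 2) /
          ∏ i ∈ range (n - l), (1 - h ^ (i + 1))))
      + ENNReal.ofReal (∑ S ∈ (Icc 1 M).powersetCard n, ∏ i ∈ S, a i)) ≠ ⊤ :=
    ENNReal.add_ne_top.mpr ⟨ENNReal.ofReal_ne_top, ENNReal.ofReal_ne_top⟩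
  have hreal : (∑' i : {f : Fin n → ℕ // StrictMono f ∧ ∀ j, 1 ≤ f j}, ∏ j, a (i.1 j))
      = T.toReal := by
    rw [hTdef, ENNReal.tsum_toReal_eq (fun f => (ENNReal.prod_lt_top
      (fun j _ => ENNReal.ofReal_lt_top)).ne)]
    refine tsum_congr fun f => ?_
    rw [ENNReal.toReal_prod]
    exact Finset.prod_congr rfl fun j _ => (ENNReal.toReal_ofReal (ha0 _)).symm
  have hfinal := ENNReal.toReal_mono hne hle
  rw [ENNReal.toReal_add ENNReal.ofReal_ne_top ENNReal.ofReal_ne_top,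
    ENNReal.toReal_ofReal hR0, ENNReal.toReal_ofReal hA0] at hfinal
  rw [hreal]
  linarith
end

section
/- Let 0 < h < 1, K ≥ 0, N ≥ 29. If |δₙ| ≤ Kⁿ·h^{n(n+1)/2}/∏_{i=1}^n(1-hⁱ) for all n ≥ N, and additionally K·h^{N+1}/(1-h^{N+1}) ≤ 1/2, then |Σ_{n=N}^∞ δₙ| ≤ 2·K^N·h^{N(N+1)/2}/∏_{i=1}^N(1-hⁱ). -/
set_option maxHeartbeats 1000000


/-- If `|δₙ| ≤ Kⁿ Eₙ(h)` for all `n ≥ N` with `Eₙ(h) = h^(n(n+1)/2)/∏_{i=1}^n (1-hⁱ)`,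
`N ≥ 29`, and `K·h^{N+1}/(1-h^{N+1}) ≤ 1/2`, then the tail `Σ_{n=N}^∞ δₙ` converges with
`|Σ_{n=N}^∞ δₙ| ≤ 2·K^N·E_N(h)`. -/
theorem geometric_tail_bound (δ : ℕ → ℝ) (K h : ℝ) (hK : 0 ≤ K) (h0 : 0 < h)
    (h1 : h < 1) (N : ℕ) (hN : 29 ≤ N)
    (hδ : ∀ n : ℕ, N ≤ n → |δ n| ≤
      K ^ n * (h ^ (n * (n + 1) / 2) / ∏ i ∈ Finset.range n, (1 - h ^ (i + 1))))
    (hratio : K * h ^ (N + 1) / (1 - h ^ (N + 1)) ≤ 1 / 2) :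
    Summable (fun n : ℕ => δ (n + N)) ∧
    |∑' n : ℕ, δ (n + N)| ≤
      2 * K ^ N * (h ^ (N * (N + 1) / 2) / ∏ i ∈ Finset.range N, (1 - h ^ (i + 1))) := by
  set B : ℕ → ℝ := fun n =>
    K ^ n * (h ^ (n * (n + 1) / 2) / ∏ i ∈ Finset.range n, (1 - h ^ (i + 1))) with hB
  have hden : ∀ n : ℕ, 0 < 1 - h ^ (n + 1) := by
    intro n
    have : h ^ (n + 1) < 1 := pow_lt_one₀ h0.le h1 (Nat.succ_ne_zero n)
    linarith
  have hprodpos : ∀ n, (0:ℝ) < ∏ i ∈ Finset.range n, (1 - h ^ (i + 1)) := by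
    intro n
    exact Finset.prod_pos fun i _ => hden i
  have hBpos : ∀ n, 0 ≤ B n := fun n =>
    mul_nonneg (pow_nonneg hK n) (div_nonneg (pow_nonneg h0.le _) (hprodpos n).le)
  have hstep : ∀ n, N ≤ n → B (n + 1) ≤ (1/2) * B n := by
    intro n hn
    have hr : K * h ^ (n + 1) / (1 - h ^ (n + 1)) ≤ 1/2 := by
      calc K * h ^ (n + 1) / (1 - h ^ (n + 1))
          ≤ K * h ^ (N + 1) / (1 - h ^ (N + 1)) := by
            have hle : h ^ (n + 1) ≤ h ^ (N + 1) :=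
              pow_le_pow_of_le_one h0.le h1.le (by omega)
            exact div_le_div₀ (by positivity)
              (mul_le_mul_of_nonneg_left hle hK)
              (hden N) (by linarith)
        _ ≤ 1/2 := hratio
    have hBeq : B (n + 1) = (K * h ^ (n + 1) / (1 - h ^ (n + 1))) * B n := by
      simp only [hB]
      rw [Finset.prod_range_succ,
        show (n + 1) * ((n + 1) + 1) / 2 = n * (n + 1) / 2 + (n + 1) from by
          have hmul : (n+1)*((n+1)+1) = n*(n+1) + 2*(n+1) := by ring
          omega,
        pow_add, pow_succ]
      have h1 := (hprodpos n).ne'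
      have h2 := (hden n).ne'
      field_simp
      ring
    rw [hBeq]
    exact mul_le_mul_of_nonneg_right hr (hBpos n)
  have hgeo : ∀ n : ℕ, B (n + N) ≤ B N * (1/2)^n := by
    intro n
    induction n with
    | zero => simp
    | succ k ih =>
      calc B (k + 1 + N) = B ((k + N) + 1) := by rw [show k+1+N = (k+N)+1 from by omega]
        _ ≤ (1/2) * B (k + N) := hstep (k + N) (Nat.le_add_left N k)
        _ ≤ (1/2) * (B N * (1/2)^k) := by
            have := ih; nlinarith [hBpos (k + N)]
        _ = B N * (1/2)^(k+1) := by ring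
  have hbound : ∀ n : ℕ, |δ (n + N)| ≤ B N * (1/2)^n := fun n =>
    (hδ (n + N) (Nat.le_add_left N n)).trans (hgeo n)
  have hsum_g : Summable (fun n : ℕ => B N * (1/2:ℝ)^n) :=
    (summable_geometric_of_lt_one (by norm_num) (by norm_num)).mul_left _
  have hsum_abs : Summable (fun n : ℕ => |δ (n + N)|) :=
    hsum_g.of_nonneg_of_le (fun n => abs_nonneg _) hbound
  have hnorm : Summable (fun n : ℕ => ‖δ (n + N)‖) := by
    simpa [Real.norm_eq_abs] using hsum_abs
  have hsum : Summable (fun n : ℕ => δ (n + N)) := hnorm.of_norm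
  refine ⟨hsum, ?_⟩
  have htsum_g : ∑' n : ℕ, B N * (1/2:ℝ)^n = B N * 2 := by
    rw [tsum_mul_left, tsum_geometric_of_lt_one (by norm_num) (by norm_num)]
    norm_num
  calc |∑' n : ℕ, δ (n + N)| ≤ ∑' n : ℕ, |δ (n + N)| := by
        simpa [Real.norm_eq_abs] using norm_tsum_le_tsum_norm hnorm
    _ ≤ ∑' n : ℕ, B N * (1/2:ℝ)^n := Summable.tsum_le_tsum hbound hsum_abs hsum_g
    _ = B N * 2 := htsum_g
    _ = 2 * K ^ N * (h ^ (N * (N + 1) / 2) / ∏ i ∈ Finset.range N, (1 - h ^ (i + 1))) := by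
        rw [hB]; ring
end

section
/- Let D be the open disc in ℂ of center c and radius ρ with c, ρ > 0 and c - ρ + 2 > 0, and let s > 0. Define L f(z) = (z+1)^{-2s} f(1/(z+1)) + (z+2)^{-2s} f(1/(z+2)) for f analytic on D, assuming 1/(z+1), 1/(z+2) ∈ D for z ∈ D. If f is analytic and bounded on D then Lf is analytic and bounded on D, with sup norm ‖Lf‖_∞ ≤ ((1+c-ρ)^{-2s} + (2+c-ρ)^{-2s})·‖f‖_∞. -/
open Complex Metric

lemma term_aux (c ρ s t : ℝ) (hs : 0 < s) (ht : 0 < c - ρ + t) {z : ℂ}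
    (hz : z ∈ ball (c : ℂ) ρ) :
    (z + (t : ℂ)) ∈ Complex.slitPlane ∧
      ‖(z + (t : ℂ)) ^ (-(2 * s) : ℂ)‖ ≤ (t + c - ρ) ^ (-(2 * s)) := by
  have hre : c - ρ < z.re := by
    have habs := Complex.abs_re_le_norm (z - (c : ℂ))
    rw [mem_ball, Complex.dist_eq] at hz
    have h' : |z.re - c| < ρ := lt_of_le_of_lt (by simpa using habs) hz
    linarith [(abs_lt.mp h').1]
  have hre' : 0 < (z + (t : ℂ)).re := by
    simp only [Complex.add_re, Complex.ofReal_re]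
    linarith
  refine ⟨Or.inl hre', ?_⟩
  have habs : (t + c - ρ : ℝ) ≤ ‖z + (t : ℂ)‖ := by
    have h := Complex.re_le_norm (z + (t : ℂ))
    simp only [Complex.add_re, Complex.ofReal_re] at h
    linarith
  have hcast : (-(2 * s) : ℂ) = ((-(2 * s) : ℝ) : ℂ) := by push_cast; ring
  rw [hcast, Complex.norm_cpow_real]
  exact Real.rpow_le_rpow_of_nonpos (by linarith) habs (by linarith)

/-- Well-definedness and sup-norm bound for the transfer operator
`L f(z) = (z+1)^{-2s} f(1/(z+1)) + (z+2)^{-2s} f(1/(z+2))` on bounded analytic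
functions on the disc `D = D(c,ρ)`: if the maps `z ↦ 1/(z+i)` send `D` into `D` and
`f` is analytic on `D` with `|f| ≤ B`, then `Lf` is analytic on `D` and
`|Lf| ≤ ((1+c-ρ)^{-2s} + (2+c-ρ)^{-2s})·B` on `D`. -/
theorem transfer_operator_bound (c ρ s : ℝ) (hc : 0 < c) (hρ : 0 < ρ)
    (h2 : 0 < c - ρ + 2) (h1 : 0 < c - ρ + 1) (hs : 0 < s)
    (hmap : ∀ z ∈ Metric.ball (c : ℂ) ρ,
      1 / (z + 1) ∈ Metric.ball (c : ℂ) ρ ∧ 1 / (z + 2) ∈ Metric.ball (c : ℂ) ρ)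
    (f : ℂ → ℂ) (hf : DifferentiableOn ℂ f (Metric.ball (c : ℂ) ρ))
    (B : ℝ) (hB : ∀ z ∈ Metric.ball (c : ℂ) ρ, ‖f z‖ ≤ B) :
    DifferentiableOn ℂ
      (fun z => (z + 1) ^ (-(2 * s) : ℂ) * f (1 / (z + 1)) +
        (z + 2) ^ (-(2 * s) : ℂ) * f (1 / (z + 2))) (Metric.ball (c : ℂ) ρ) ∧
    ∀ z ∈ Metric.ball (c : ℂ) ρ,
      ‖(z + 1) ^ (-(2 * s) : ℂ) * f (1 / (z + 1)) +
          (z + 2) ^ (-(2 * s) : ℂ) * f (1 / (z + 2))‖ ≤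
        ((1 + c - ρ) ^ (-(2 * s)) + (2 + c - ρ) ^ (-(2 * s))) * B := by
  have hopen : IsOpen (Metric.ball (c : ℂ) ρ) := Metric.isOpen_ball
  have key1 : ∀ z ∈ Metric.ball (c : ℂ) ρ, (z + 1) ∈ Complex.slitPlane ∧
      ‖(z + 1) ^ (-(2 * s) : ℂ)‖ ≤ (1 + c - ρ) ^ (-(2 * s)) := by
    intro z hz
    have := term_aux c ρ s 1 hs h1 hz
    push_cast at this
    exact this
  have key2 : ∀ z ∈ Metric.ball (c : ℂ) ρ, (z + 2) ∈ Complex.slitPlane ∧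
      ‖(z + 2) ^ (-(2 * s) : ℂ)‖ ≤ (2 + c - ρ) ^ (-(2 * s)) := by
    intro z hz
    have := term_aux c ρ s 2 hs h2 hz
    push_cast at this
    exact this
  have hB0 : 0 ≤ B := le_trans (norm_nonneg _)
    (hB c (by simp [Metric.mem_ball, hρ]))
  constructor
  · intro z hz
    have h1d : DifferentiableAt ℂ (fun z : ℂ => (z + 1) ^ (-(2 * s) : ℂ)) z :=
      (differentiableAt_id.add_const 1).cpow (differentiableAt_const _) (key1 z hz).1
    have h2d : DifferentiableAt ℂ (fun z : ℂ => (z + 2) ^ (-(2 * s) : ℂ)) z :=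
      (differentiableAt_id.add_const 2).cpow (differentiableAt_const _) (key2 z hz).1
    have hf1 : DifferentiableAt ℂ (fun z : ℂ => f (1 / (z + 1))) z := by
      have hinner : DifferentiableAt ℂ (fun z : ℂ => 1 / (z + 1)) z := by
        simp only [one_div]
        exact (differentiableAt_id.add_const 1).inv
          (Complex.slitPlane_ne_zero (key1 z hz).1)
      exact (hf.differentiableAt (hopen.mem_nhds (hmap z hz).1)).comp z hinner
    have hf2 : DifferentiableAt ℂ (fun z : ℂ => f (1 / (z + 2))) z := by
      have hinner : DifferentiableAt ℂ (fun z : ℂ => 1 / (z + 2)) z := by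
        simp only [one_div]
        exact (differentiableAt_id.add_const 2).inv
          (Complex.slitPlane_ne_zero (key2 z hz).1)
      exact (hf.differentiableAt (hopen.mem_nhds (hmap z hz).2)).comp z hinner
    exact ((h1d.mul hf1).add (h2d.mul hf2)).differentiableWithinAt
  · intro z hz
    have t1 : ‖(z + 1) ^ (-(2 * s) : ℂ) * f (1 / (z + 1))‖ ≤
        (1 + c - ρ) ^ (-(2 * s)) * B := by
      rw [norm_mul]
      exact mul_le_mul (key1 z hz).2 (hB _ (hmap z hz).1) (norm_nonneg _)
        (Real.rpow_nonneg (by linarith) _)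
    have t2 : ‖(z + 2) ^ (-(2 * s) : ℂ) * f (1 / (z + 2))‖ ≤
        (2 + c - ρ) ^ (-(2 * s)) * B := by
      rw [norm_mul]
      exact mul_le_mul (key2 z hz).2 (hB _ (hmap z hz).2) (norm_nonneg _)
        (Real.rpow_nonneg (by linarith) _)
    calc ‖_‖ ≤ _ + _ := norm_add_le _ _
      _ ≤ (1 + c - ρ) ^ (-(2 * s)) * B + (2 + c - ρ) ^ (-(2 * s)) * B :=
        add_le_add t1 t2
      _ = ((1 + c - ρ) ^ (-(2 * s)) + (2 + c - ρ) ^ (-(2 * s))) * B := by ring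
end
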